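/- arXiv:2002.03221 — 3 statements merged into one kernel-verified Lean document; each statement's English description precedes it below -/
import Mathlib

section
/- Let a1, a2, a3, a4 be positive real numbers with a2 ≥ 2, and define f : (0,∞) → ℝ by f(x) = a1·√x·log(a2·x) + a4·log(a2·x) − a3·x. Then for every x ≥ 2, f(x) ≤ ( a1·√(2·a4/a3) + (8·a1²/(3·a3))·log(18·a1·√a2/a3) ) · log( (√a2/e)·√( 2·a4/a3 + (64/9)·(a1/a3)²·log(18·a1·√a2/a3)² ) ) + a4·log( a2·( 2·a4/a3 + (64/9)·(a1/a3)²·log(18·a1·√a2/a3)² ) ). -/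
open Real

set_option maxHeartbeats 1000000

private lemma log_tangent {t c : ℝ} (ht : 0 < t) (hc : 0 < c) :
    Real.log t ≤ Real.log c + t / c - 1 := by
  have h := Real.log_le_sub_one_of_pos (div_pos ht hc)
  rw [Real.log_div ht.ne' hc.ne'] at h
  linarith

private lemma mul_log_ge {u : ℝ} (hu : 0 < u) : -1 ≤ u * (Real.log u - 1) := by
  have h := Real.log_le_sub_one_of_pos (inv_pos.mpr hu)
  rw [Real.log_inv] at h
  have h2 : u * u⁻¹ = 1 := mul_inv_cancel₀ hu.ne'
  nlinarith only [h, h2, hu]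

private lemma exp_three_halves_lt : Real.exp (3/2) < 4.5 := by
  have h : Real.exp (3/2) * Real.exp (3/2) = Real.exp 1 * (Real.exp 1 * Real.exp 1) := by
    rw [← Real.exp_add, ← Real.exp_add, ← Real.exp_add]; norm_num
  nlinarith only [h, Real.exp_one_lt_d9, Real.exp_pos 1, Real.exp_pos (3/2),
    sq_nonneg (Real.exp (3/2) - 4.5)]

private lemma exp_neg_one_lt : Real.exp (-1) < 0.37 := by
  have h : Real.exp (-1) * Real.exp 1 = 1 := by rw [← Real.exp_add]; norm_num
  nlinarith only [h, Real.exp_one_gt_d9, Real.exp_pos (-1)]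

private lemma neg_mul_exp_le (L : ℝ) : (-L) * Real.exp L ≤ Real.exp (-1) := by
  have h := Real.add_one_le_exp (-1 - L)
  have h2 : Real.exp (-1 - L) * Real.exp L = Real.exp (-1) := by
    rw [← Real.exp_add]; ring_nf
  have h3 : (-L) * Real.exp L ≤ Real.exp (-1 - L) * Real.exp L :=
    mul_le_mul_of_nonneg_right (by linarith) (Real.exp_pos L).le
  rwa [h2] at h3

private lemma H_part (a3 a4 s ss lg lgs : ℝ) (hs0 : 0 < s) (hss0 : 0 < ss) (ha4 : 0 < a4)
    (h2a4 : 2*a4 ≤ a3*(ss*ss)) (htan : lg ≤ lgs + s/ss - 1) :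
    2*a4*lg - a3/2*(s*s) ≤ 2*a4*lgs := by
  have hq0 : 0 ≤ ss*((a3/2*(s*s) + 2*a4)*ss - 2*a4*s) := by
    nlinarith only [mul_nonneg (mul_nonneg hs0.le hs0.le) (sub_nonneg.mpr h2a4),
      mul_nonneg ha4.le (sq_nonneg (s - ss)),
      mul_nonneg ha4.le (mul_nonneg hss0.le hss0.le)]
  have hq : 2*a4*s ≤ (a3/2*(s*s) + 2*a4)*ss := by nlinarith only [hq0, hss0]
  have hdiv : 2*a4*s/ss ≤ a3/2*(s*s) + 2*a4 := (div_le_iff₀ hss0).mpr hq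
  have h1 := mul_le_mul_of_nonneg_left htan (by positivity : (0:ℝ) ≤ 2*a4)
  have h2 : 2*a4*(s/ss) = 2*a4*s/ss := by ring
  linarith only [h1, hdiv, h2]

private lemma G_main (a1 a3 b s L sa ss T : ℝ)
    (ha1 : 0 < a1) (ha3 : 0 < a3)
    (hb0 : 0 < b) (hb14 : (1.414:ℝ) ≤ b)
    (hs0 : 0 < s) (hs14 : (1.414:ℝ) ≤ s)
    (hsa0 : 0 < sa) (hss0 : 0 < ss)
    (hsplit : ss * ss = sa * sa + T * T)
    (ha3T : a3 * T = 8 * a1 * L / 3)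
    (hexpL : Real.exp L = 18 * a1 * b / a3) :
    2 * a1 * s * Real.log (b * s) - a3 / 2 * (s * s) ≤
      (a1 * (sa + T)) * (Real.log (b * ss) - 1) := by
  set lam := Real.log (b * ss) - 1 with hlam
  clear_value lam
  have hbss0 : 0 < b * ss := mul_pos hb0 hss0
  have hsass : sa ≤ ss := by nlinarith only [hsplit, sq_nonneg T, hsa0, hss0]
  have hTle : T ≤ ss := by nlinarith only [hsplit, mul_pos hsa0 hsa0, hss0]
  have hTge : -ss ≤ T := by nlinarith only [hsplit, mul_pos hsa0 hsa0, hss0]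
  -- common tangent at ss
  have htan : Real.log (b * s) ≤ Real.log (b * ss) + s / ss - 1 := by
    have h := log_tangent (mul_pos hb0 hs0) hbss0
    rwa [mul_div_mul_left _ _ hb0.ne'] at h
  have hGt : 2 * a1 * s * Real.log (b * s) - a3 / 2 * (s * s) ≤
      2 * a1 * lam * s + 2 * a1 * (s * s) / ss - a3 / 2 * (s * s) := by
    have h1 := mul_le_mul_of_nonneg_left htan (by positivity : (0:ℝ) ≤ 2 * a1 * s)
    rw [hlam]
    have he : 2*a1*s*(s/ss) = 2*a1*(s*s)/ss := by ring
    linarith only [h1, he]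
  rcases le_or_gt lam 0 with hlam0 | hlam0
  · -- lam ≤ 0
    have hbsse : b * ss ≤ Real.exp 1 := by
      have h1 : Real.exp (Real.log (b * ss)) ≤ Real.exp 1 :=
        Real.exp_le_exp.mpr (by rw [hlam] at hlam0; linarith)
      rwa [Real.exp_log hbss0] at h1
    rcases le_or_gt (4 * a1) (a3 * ss) with hcase | hcase
    · -- case Ia
      have h1 : 2 * a1 * (s * s) / ss ≤ a3 / 2 * (s * s) := by
        rw [div_le_iff₀ hss0]
        linarith only [mul_nonneg (mul_nonneg hs0.le hs0.le) (sub_nonneg.mpr hcase)]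
      have hss193 : ss ≤ 1.93 := by
        linarith only [mul_le_mul_of_nonneg_right hb14 hss0.le, hbsse, Real.exp_one_lt_d9]
      have hC1 : a1 * (sa + T) ≤ 2.828 * a1 := by
        rcases le_or_gt T 0 with hT | hT
        · linarith only [mul_nonpos_of_nonneg_of_nonpos ha1.le hT,
            mul_le_mul_of_nonneg_left hsass ha1.le,
            mul_le_mul_of_nonneg_left hss193 ha1.le, ha1.le]
        · have h2 : (sa + T) * (sa + T) ≤ 2 * (ss * ss) := by
            linarith only [sq_nonneg (sa - T), hsplit]
          have h3 : sa + T ≤ 1.4143 * ss := by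
            nlinarith only [h2, sq_nonneg (sa + T - 1.4143 * ss), hss0, hsa0, hT]
          linarith only [mul_le_mul_of_nonneg_left h3 ha1.le,
            mul_le_mul_of_nonneg_left hss193 (by positivity : (0:ℝ) ≤ 1.4143 * a1), ha1.le]
      have h4 : 2 * a1 * lam * s ≤ 2 * a1 * lam * 1.414 := by
        linarith only [mul_nonneg (mul_nonneg ha1.le (neg_nonneg.mpr hlam0))
          (by linarith only [hs14] : (0:ℝ) ≤ s - 1.414)]
      have h5 : 2 * a1 * lam * 1.414 ≤ (a1 * (sa + T)) * lam := by
        linarith only [mul_nonneg (sub_nonneg.mpr hC1) (neg_nonneg.mpr hlam0)]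
      linarith only [hGt, h1, h4, h5]
    · -- case II
      have hTTss : T * T ≤ ss * ss := by linarith only [hsplit, mul_pos hsa0 hsa0]
      have hLle : L ≤ 3/2 := by
        have h1 : (a3*T)*(a3*T) ≤ (a3*ss)*(a3*ss) := by
          nlinarith only [mul_le_mul_of_nonneg_left hTTss (by positivity : (0:ℝ) ≤ a3*a3)]
        have h2 : (8*a1*L/3)*(8*a1*L/3) ≤ (a3*ss)*(a3*ss) := by rw [← ha3T]; exact h1
        have h3 : (a3*ss)*(a3*ss) < (4*a1)*(4*a1) := by
          nlinarith only [mul_pos ha3 hss0, hcase, ha1]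
        nlinarith only [h2, h3, mul_nonneg (mul_pos ha1 ha1).le (sq_nonneg (L - 3/2)),
          mul_pos ha1 ha1]
      have hexpL45 : Real.exp L < 4.5 :=
        lt_of_le_of_lt (Real.exp_le_exp.mpr hLle) exp_three_halves_lt
      have h4ab : 4 * a1 * b < a3 := by
        have h1 : 18 * a1 * b / a3 < 4.5 := by rw [← hexpL]; exact hexpL45
        rw [div_lt_iff₀ ha3] at h1
        linarith only [h1, mul_pos (mul_pos ha1 hb0) ha3, mul_pos ha1 hb0]
      have htan2 : Real.log (b * s) ≤ Real.log (2 * b) + s / 2 - 1 := by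
        have h := log_tangent (mul_pos hb0 hs0) (by positivity : (0:ℝ) < 2 * b)
        have h2 : b * s / (2 * b) = s / 2 := by
          field_simp
        rwa [h2] at h
      have hE : 2 * a1 * s * Real.log (b * s) - a3 / 2 * (s * s) ≤
          2 * a1 * (Real.log (2*b) - 1) * s + (a1 - a3/2) * (s * s) := by
        have h1 := mul_le_mul_of_nonneg_left htan2 (by positivity : (0:ℝ) ≤ 2 * a1 * s)
        have he : 2*a1*s*(s/2) = a1*(s*s) := by ring
        linarith only [h1, he]
      have hl2b : Real.log (2*b) ≤ 2*b - 1 := Real.log_le_sub_one_of_pos (by positivity)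
      have hfac : 2 * a1 * (Real.log (2*b) - 1) + (a1 - a3/2) * (s + 1.41) ≤ 0 := by
        linarith only [mul_le_mul_of_nonneg_left hl2b (by positivity : (0:ℝ) ≤ 2*a1),
          mul_nonneg (by linarith only [hs14] : (0:ℝ) ≤ s - 1.41)
            (by linarith only [h4ab, mul_le_mul_of_nonneg_left hb14 ha1.le, ha1.le] : (0:ℝ) ≤ a3/2 - a1),
          h4ab, mul_le_mul_of_nonneg_left hb14 ha1.le, ha1]
      have hEr : 2 * a1 * (Real.log (2*b) - 1) * s + (a1 - a3/2) * (s * s) ≤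
          2 * a1 * (Real.log (2*b) - 1) * 1.41 + (a1 - a3/2) * (1.41*1.41) := by
        linarith only [mul_nonpos_of_nonneg_of_nonpos
          (by linarith only [hs14] : (0:ℝ) ≤ s - 1.41) hfac]
      have hlog2b4 : Real.log (2*b) ≤ 2*Real.log 2 - 1 + b/2 := by
        have h := log_tangent (by positivity : (0:ℝ) < 2*b) (by norm_num : (0:ℝ) < 4)
        have h4 : Real.log (4:ℝ) = 2 * Real.log 2 := by
          rw [show (4:ℝ) = 2*2 by norm_num, Real.log_mul two_ne_zero two_ne_zero]; ring
        rw [h4] at h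
        have h5 : 2*b/4 = b/2 := by ring
        linarith only [h, h5]
      have hbEr : b * (2 * a1 * (Real.log (2*b) - 1) * 1.41 + (a1 - a3/2) * (1.41*1.41)) ≤
          -(2*a1) := by
        linarith only [mul_le_mul_of_nonneg_left hlog2b4 (by positivity : (0:ℝ) ≤ 2.82*(a1*b)),
          mul_le_mul_of_nonneg_left Real.log_two_lt_d9.le (by positivity : (0:ℝ) ≤ 5.64*(a1*b)),
          mul_lt_mul_of_pos_right h4ab hb0,
          mul_nonneg ha1.le (sq_nonneg (b - 1.414)),
          mul_le_mul_of_nonneg_left hb14 ha1.le, ha1]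
      have ht1 : -1 ≤ (b*sa) * lam := by
        have hmono : Real.log (b*sa) ≤ Real.log (b*ss) :=
          Real.log_le_log (mul_pos hb0 hsa0) (mul_le_mul_of_nonneg_left hsass hb0.le)
        have h2 : (b*sa)*(Real.log (b*sa) - 1) ≤ (b*sa)*lam :=
          mul_le_mul_of_nonneg_left (by rw [hlam]; linarith only [hmono]) (mul_pos hb0 hsa0).le
        linarith only [mul_log_ge (mul_pos hb0 hsa0), h2]
      have ht2 : -1 ≤ (b*T) * lam := by
        rcases le_or_gt T 0 with hT | hT
        · linarith only [mul_nonneg (mul_nonneg hb0.le (neg_nonneg.mpr hT))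
            (neg_nonneg.mpr hlam0)]
        · have hmono : Real.log (b*T) ≤ Real.log (b*ss) :=
            Real.log_le_log (mul_pos hb0 hT) (mul_le_mul_of_nonneg_left hTle hb0.le)
          have h2 : (b*T)*(Real.log (b*T) - 1) ≤ (b*T)*lam :=
            mul_le_mul_of_nonneg_left (by rw [hlam]; linarith only [hmono]) (mul_pos hb0 hT).le
          linarith only [mul_log_ge (mul_pos hb0 hT), h2]
      have hbC1 : -(2*a1) ≤ b * ((a1*(sa+T)) * lam) := by
        linarith only [mul_le_mul_of_nonneg_left ht1 ha1.le,
          mul_le_mul_of_nonneg_left ht2 ha1.le]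
      have hchain : b * (2 * a1 * (Real.log (2*b) - 1) * 1.41 + (a1 - a3/2) * (1.41*1.41)) ≤
          b * ((a1*(sa+T)) * lam) := by linarith only [hbEr, hbC1]
      have hfin := le_of_mul_le_mul_left hchain hb0
      exact hE.trans (hEr.trans hfin)
  · -- lam > 0
    have hkeyD : a1^2*lam*ss ≤ (a3/2*ss - 2*a1) * (a1*(sa+T)) ∧ 0 < a3/2*ss - 2*a1 := by
      rcases le_or_gt 0 L with hL | hL
      · -- L ≥ 0
        have hT0 : 0 ≤ T := by nlinarith only [ha3T, mul_nonneg ha1.le hL, ha3]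
        have hssT : ss ≤ sa + T := by
          nlinarith only [mul_nonneg hsa0.le hT0, hsplit, hss0, hsa0, hT0]
        have hlog18 : Real.log (18*a1*b/a3) = L := by rw [← hexpL, Real.log_exp]
        have hsplitlog : Real.log (b*ss) = Real.log (8*a1*b/a3) + Real.log (a3*ss/(8*a1)) := by
          rw [← Real.log_mul (by positivity) (by positivity)]
          congr 1
          field_simp
        have hlogA : Real.log (8*a1*b/a3) = Real.log (4/9 : ℝ) + L := by
          rw [show (8*a1*b/a3 : ℝ) = 4/9*(18*a1*b/a3) by ring,
            Real.log_mul (by norm_num) (by positivity), hlog18]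
        have hlog49 : Real.log (4/9 : ℝ) ≤ 0 := Real.log_nonpos (by norm_num) (by norm_num)
        have hlogB : Real.log (a3*ss/(8*a1)) ≤ a3*ss/(8*a1) - 1 :=
          Real.log_le_sub_one_of_pos (by positivity)
        have hstar : a1 * lam ≤ a3/2*ss - 2*a1 := by
          have e1 : a1 * (a3*ss/(8*a1)) = a3*ss/8 := by field_simp
          have e2 : a1 * L ≤ 3/8*(a3*ss) := by
            linarith only [ha3T, mul_le_mul_of_nonneg_left hTle ha3.le]
          have e3 := mul_le_mul_of_nonneg_left hlogB ha1.le
          have e4 := mul_le_mul_of_nonneg_left hlog49 ha1.le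
          rw [hlam, hsplitlog, hlogA]
          linarith only [e1, e2, e3, e4]
        have hD0 : 0 < a3/2*ss - 2*a1 := lt_of_lt_of_le (mul_pos ha1 hlam0) hstar
        refine ⟨?_, hD0⟩
        nlinarith only [hstar, mul_le_mul_of_nonneg_left hssT ha1.le,
          (mul_pos ha1 hlam0).le, (mul_pos ha1 hss0).le, hD0.le]
      · -- L < 0
        have hKpos : 0 < -T := by
          nlinarith only [ha3T, mul_pos ha1 (neg_pos.mpr hL), ha3]
        have hue : Real.exp 1 < b*ss := by
          have h1 : Real.exp 1 < Real.exp (Real.log (b*ss)) :=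
            Real.exp_lt_exp.mpr (by rw [hlam] at hlam0; linarith)
          rwa [Real.exp_log hbss0] at h1
        have ha3expL : a3 * Real.exp L = 18*a1*b := by rw [hexpL]; field_simp
        have hid : a3*(b*(-T)) = 4/27*(a3*((-L)*Real.exp L)) := by
          linear_combination (-b)*ha3T + (4/27)*L*ha3expL
        have hbT : b*(-T) ≤ 4/27*Real.exp (-1) := by
          have h1 : a3*(b*(-T)) ≤ a3*(4/27*Real.exp (-1)) := by
            rw [hid]
            linarith only [mul_le_mul_of_nonneg_left (neg_mul_exp_le L) ha3.le]
          exact le_of_mul_le_mul_left h1 ha3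
        have hbT011 : b*(-T) ≤ 0.0549 := by linarith only [hbT, exp_neg_one_lt]
        have h18ab : 18*a1*b < a3 := by
          have h1 : Real.exp L < 1 := by
            rw [show (1:ℝ) = Real.exp 0 by simp]
            exact Real.exp_lt_exp.mpr hL
          nlinarith only [ha3expL, ha3, h1]
        have hsaT : ss + T ≤ sa := by
          nlinarith only [mul_nonneg hKpos.le (by linarith only [hTge] : (0:ℝ) ≤ ss + T),
            hsplit, hsa0, hss0, hTge]
        have hbD : a3*((b*ss)/2 - 1/9) ≤ b*(a3/2*ss - 2*a1) := by
          linarith only [h18ab]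
        have hbD0 : 0 < b*(a3/2*ss - 2*a1) := by
          have h1 : 0 < a3*((b*ss)/2 - 1/9) :=
            mul_pos ha3 (by linarith only [hue, Real.exp_one_gt_d9])
          linarith only [h1, hbD]
        have hD0 : 0 < a3/2*ss - 2*a1 := by
          by_contra h
          push_neg at h
          have := mul_nonneg hb0.le (neg_nonneg.mpr h)
          linarith only [this, hbD0]
        have hbC1 : a1*((b*ss) - 0.11) ≤ b*(a1*(sa+T)) := by
          have h1 : b*(ss+T) ≤ b*sa := mul_le_mul_of_nonneg_left hsaT hb0.le
          linarith only [mul_le_mul_of_nonneg_left h1 ha1.le,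
            mul_le_mul_of_nonneg_left hbT011 ha1.le, ha1.le]
        have hlamu : lam ≤ b*ss - 2 := by
          rw [hlam]; linarith only [Real.log_le_sub_one_of_pos hbss0]
        have hbb : a1*b ≤ a3/18 := by linarith only [h18ab]
        have hR : a3*((b*ss)/2 - 1/9) * (a1*((b*ss) - 0.11)) ≤
            (b*(a3/2*ss - 2*a1)) * (b*(a1*(sa+T))) := by
          apply mul_le_mul hbD hbC1 ?_ hbD0.le
          exact mul_nonneg ha1.le (by linarith only [hue, Real.exp_one_gt_d9])
        have hXnn : 0 ≤ a1*(lam*(b*ss)) :=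
          mul_nonneg ha1.le (mul_nonneg hlam0.le hbss0.le)
        have hu2 : a1*(lam*(b*ss)) ≤ a1*((b*ss - 2)*(b*ss)) :=
          mul_le_mul_of_nonneg_left (mul_le_mul_of_nonneg_right hlamu hbss0.le) ha1.le
        have hmain : a1^2*lam*ss*(b*b) ≤ ((a3/2*ss - 2*a1)*(a1*(sa+T)))*(b*b) := by
          linarith only [mul_le_mul_of_nonneg_right hbb hXnn,
            mul_le_mul_of_nonneg_left hu2 (by positivity : (0:ℝ) ≤ a3/18),
            hR,
            mul_nonneg (mul_pos ha1 ha3).le (sq_nonneg (b*ss - 0.061875)),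
            (mul_pos ha1 ha3).le]
        exact ⟨le_of_mul_le_mul_right hmain (mul_pos hb0 hb0), hD0⟩
    obtain ⟨hkey, hD0⟩ := hkeyD
    have h5 : 2*a1*lam*s*ss + 2*a1*(s*s) - a3/2*(s*s)*ss ≤ ((a1*(sa+T))*lam)*ss := by
      nlinarith only [sq_nonneg (a1*lam*ss - (a3/2*ss - 2*a1)*s), hD0,
        mul_le_mul_of_nonneg_right hkey (mul_nonneg hlam0.le hss0.le)]
    have hc : 2*a1*(s*s)/ss*ss = 2*a1*(s*s) := div_mul_cancel₀ _ hss0.ne'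
    have h6 : (2*a1*lam*s + 2*a1*(s*s)/ss - a3/2*(s*s))*ss ≤ ((a1*(sa+T))*lam)*ss := by
      linarith only [h5, hc]
    have h7 := le_of_mul_le_mul_right h6 hss0
    linarith only [hGt, h7]

/-- Lemma bounding `f(x) = a1·√x·log(a2·x) + a4·log(a2·x) − a3·x` for `x ≥ 2`,
when `a1, a2, a3, a4 > 0` and `a2 ≥ 2`. -/
theorem stmt_0 (a1 a2 a3 a4 : ℝ) (ha1 : 0 < a1) (ha2 : 0 < a2) (ha3 : 0 < a3)
    (ha4 : 0 < a4) (ha2' : 2 ≤ a2) :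
    ∀ x : ℝ, 2 ≤ x →
      a1 * Real.sqrt x * Real.log (a2 * x) + a4 * Real.log (a2 * x) - a3 * x ≤
        (a1 * Real.sqrt (2 * a4 / a3)
            + 8 * a1 ^ 2 / (3 * a3) * Real.log (18 * a1 * Real.sqrt a2 / a3))
          * Real.log ((Real.sqrt a2 / Real.exp 1)
            * Real.sqrt (2 * a4 / a3
                + 64 / 9 * (a1 / a3) ^ 2 * Real.log (18 * a1 * Real.sqrt a2 / a3) ^ 2))
        + a4 * Real.log (a2 * (2 * a4 / a3
            + 64 / 9 * (a1 / a3) ^ 2 * Real.log (18 * a1 * Real.sqrt a2 / a3) ^ 2)) := by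
  intro x hx
  have hx0 : (0:ℝ) < x := by linarith
  set b := Real.sqrt a2 with hbdef
  set s := Real.sqrt x with hsdef
  set L := Real.log (18 * a1 * b / a3) with hLdef
  set xs := 2 * a4 / a3 + 64 / 9 * (a1 / a3) ^ 2 * L ^ 2 with hxsdef
  set sa := Real.sqrt (2 * a4 / a3) with hsadef
  set ss := Real.sqrt xs with hssdef
  set lam := Real.log (b * ss) - 1 with hlamdef
  set C1 := a1 * sa + 8 * a1 ^ 2 / (3 * a3) * L with hC1def
  have hb0 : 0 < b := by rw [hbdef]; positivity
  have hb2 : b * b = a2 := by rw [hbdef]; exact Real.mul_self_sqrt ha2.le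
  have hs2sq : Real.sqrt 2 * Real.sqrt 2 = 2 := Real.mul_self_sqrt (by norm_num)
  have hs2pos : (0:ℝ) < Real.sqrt 2 := Real.sqrt_pos.mpr (by norm_num)
  have hs2gt : (1.414:ℝ) < Real.sqrt 2 := by nlinarith only [hs2sq, hs2pos]
  have hbs2 : Real.sqrt 2 ≤ b := by rw [hbdef]; exact Real.sqrt_le_sqrt ha2'
  have hs0 : 0 < s := by rw [hsdef]; positivity
  have hssq : s * s = x := by rw [hsdef]; exact Real.mul_self_sqrt hx0.le
  have hss2 : Real.sqrt 2 ≤ s := by rw [hsdef]; exact Real.sqrt_le_sqrt hx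
  have h18pos : (0:ℝ) < 18 * a1 * b / a3 := by positivity
  have hexpL : Real.exp L = 18 * a1 * b / a3 := by rw [hLdef]; exact Real.exp_log h18pos
  have hxs0 : (0:ℝ) < xs := by
    rw [hxsdef]
    have h1 : (0:ℝ) ≤ 64 / 9 * (a1 / a3) ^ 2 * L ^ 2 := by positivity
    have h2 : (0:ℝ) < 2 * a4 / a3 := by positivity
    linarith only [h1, h2]
  have hsa0 : 0 < sa := by rw [hsadef]; exact Real.sqrt_pos.mpr (by positivity)
  have hsasq : sa * sa = 2 * a4 / a3 := by
    rw [hsadef]; exact Real.mul_self_sqrt (by positivity)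
  have hss0 : 0 < ss := by rw [hssdef]; exact Real.sqrt_pos.mpr hxs0
  have hsssq : ss * ss = xs := by rw [hssdef]; exact Real.mul_self_sqrt hxs0.le
  have hbss0 : 0 < b * ss := mul_pos hb0 hss0
  clear_value b s L xs sa ss lam C1
  have hs14 : (1.414:ℝ) ≤ s := by linarith only [hs2gt, hss2]
  have hb14 : (1.414:ℝ) ≤ b := by linarith only [hs2gt, hbs2]
  set T := 8 * a1 / (3 * a3) * L with hTdef
  have hT2xs : T * T = 64 / 9 * (a1 / a3) ^ 2 * L ^ 2 := by rw [hTdef]; ring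
  have hxssplit : ss * ss = sa * sa + T * T := by rw [hsssq, hsasq, hT2xs, hxsdef]
  have ha3T : a3 * T = 8 * a1 * L / 3 := by rw [hTdef]; field_simp
  have hC1T : C1 = a1 * (sa + T) := by rw [hC1def, hTdef]; ring
  clear_value T
  -- rewrite the goal
  have hRHSlog : Real.log (b / Real.exp 1 * ss) = lam := by
    rw [Real.log_mul (by positivity) hss0.ne', Real.log_div hb0.ne' (Real.exp_pos 1).ne',
      Real.log_exp, hlamdef, Real.log_mul hb0.ne' hss0.ne']
    ring
  have hloga2x : Real.log (a2 * x) = 2 * Real.log (b * s) := by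
    rw [show a2 * x = (b * s) * (b * s) by rw [← hb2, ← hssq]; ring,
      Real.log_mul (mul_pos hb0 hs0).ne' (mul_pos hb0 hs0).ne']
    ring
  have hloga2xs : Real.log (a2 * xs) = 2 * Real.log (b * ss) := by
    rw [show a2 * xs = (b * ss) * (b * ss) by rw [← hb2, ← hsssq]; ring,
      Real.log_mul hbss0.ne' hbss0.ne']
    ring
  rw [hRHSlog, hloga2x, hloga2xs, ← hssq]
  -- H part
  have htanH : Real.log (b * s) ≤ Real.log (b * ss) + s / ss - 1 := by
    have h := log_tangent (mul_pos hb0 hs0) hbss0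
    rwa [mul_div_mul_left _ _ hb0.ne'] at h
  have h2a4 : 2 * a4 ≤ a3 * (ss * ss) := by
    rw [hsssq, hxsdef]
    have h1 : a3 * (2 * a4 / a3) = 2 * a4 := by field_simp
    have h2 : (0:ℝ) ≤ a3 * (64 / 9 * (a1 / a3) ^ 2 * L ^ 2) := by positivity
    linarith only [h1, h2]
  have hH := H_part a3 a4 s ss (Real.log (b * s)) (Real.log (b * ss))
    hs0 hss0 ha4 h2a4 htanH
  -- G part
  have hG : 2 * a1 * s * Real.log (b * s) - a3 / 2 * (s * s) ≤ C1 * lam := by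
    rw [hC1T, hlamdef]
    exact G_main a1 a3 b s L sa ss T ha1 ha3 hb0 hb14 hs0 hs14 hsa0 hss0
      hxssplit ha3T hexpL
  linarith only [hG, hH]
end

section
/- Let a1, a2, a3, a4 be positive real numbers with a2 ≥ 2. If x ≥ 2 satisfies the stationarity equation a3·x = a1·√x·log(√(a2·x)·e) + a4, then x ≤ (4·a1²/a3²)·log(4·a1·√a2·e/a3)² + 2·a4/a3. -/
open Real

/-- If `a2 ≥ 2` and `x ≥ 2` satisfies the stationarity equation
`a3·x = a1·√x·log(√(a2·x)·e) + a4`, then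
`x ≤ (4·a1²/a3²)·log(4·a1·√a2·e/a3)² + 2·a4/a3`. -/
theorem stmt_3 (a1 a2 a3 a4 : ℝ) (ha1 : 0 < a1) (ha2 : 0 < a2) (ha3 : 0 < a3)
    (ha4 : 0 < a4) (ha2' : 2 ≤ a2) (x : ℝ) (hx : 2 ≤ x)
    (hstat : a3 * x = a1 * Real.sqrt x * Real.log (Real.sqrt (a2 * x) * Real.exp 1) + a4) :
    x ≤ 4 * a1 ^ 2 / a3 ^ 2 * Real.log (4 * a1 * Real.sqrt a2 * Real.exp 1 / a3) ^ 2
        + 2 * a4 / a3 := by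
  have hx0 : (0:ℝ) < x := by linarith
  have hsp : 0 < Real.sqrt x := Real.sqrt_pos.2 hx0
  set s := Real.sqrt x with hs
  have hs2 : s ^ 2 = x := Real.sq_sqrt hx0.le
  have ha2p : 0 < Real.sqrt a2 := Real.sqrt_pos.2 ha2
  set c := Real.sqrt a2 * Real.exp 1 with hc
  have hcpos : 0 < c := by
    have := Real.exp_pos 1; positivity
  have harg : Real.sqrt (a2 * x) * Real.exp 1 = c * s := by
    rw [Real.sqrt_mul ha2.le, hc, hs]; ring
  rw [harg] at hstat
  set L := Real.log (4 * a1 * Real.sqrt a2 * Real.exp 1 / a3) with hL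
  have hLc : L = Real.log (4 * a1 * c / a3) := by
    rw [hL, hc]; ring_nf
  -- log(c*s) = L + log(a3*s/(4*a1))
  have hdecomp : Real.log (c * s) = L + Real.log (a3 * s / (4 * a1)) := by
    rw [hLc, ← Real.log_mul (by positivity) (by positivity)]
    congr 1
    field_simp
  have hy : (0:ℝ) < a3 * s / (4 * a1) := by positivity
  have h0 : Real.log (a3 * s / (4 * a1)) ≤ a3 * s / (4 * a1) - 1 :=
    Real.log_le_sub_one_of_pos hy
  have hid : 4 * a1 * (a3 * s / (4 * a1)) = a3 * s := by field_simp
  have h0' : 4 * a1 * Real.log (a3 * s / (4 * a1)) ≤ a3 * s - 4 * a1 := by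
    nlinarith [mul_le_mul_of_nonneg_left h0 (show (0:ℝ) ≤ 4 * a1 by positivity), hid]
  have hmain : 4 * a1 * Real.log (c * s) ≤ 4 * a1 * L + a3 * s - 4 * a1 := by
    rw [hdecomp]
    nlinarith [h0']
  -- key multiplied inequality
  have key : 2 * a1 * a3 * s * Real.log (c * s) ≤ a3 ^ 2 * s ^ 2 + 4 * a1 ^ 2 * L ^ 2 := by
    have hms : 0 ≤ a3 * s / 2 := by positivity
    have h1 := mul_le_mul_of_nonneg_left hmain hms
    -- h1 : a3*s/2 * (4*a1*log(c*s)) ≤ a3*s/2 * (4*a1*L + a3*s - 4*a1)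
    rcases le_or_gt L 1 with hL1 | hL1
    · have hprod : 0 ≤ (1 - L) * (a1 * a3 * s) :=
        mul_nonneg (by linarith) (by positivity)
      linarith [h1, hprod, sq_nonneg (a3 * s), sq_nonneg (a1 * L)]
    · have hprod : 0 ≤ a1 ^ 2 * (L ^ 2 + 2 * L - 1) :=
        mul_nonneg (sq_nonneg a1) (by nlinarith)
      linarith [h1, hprod, sq_nonneg (a3 * s - 2 * a1 * (L - 1))]
  -- conclude
  rw [show 4 * a1 ^ 2 / a3 ^ 2 * L ^ 2 + 2 * a4 / a3 = (4 * a1 ^ 2 * L ^ 2 + 2 * a3 * a4) / a3 ^ 2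
      by field_simp, le_div_iff₀ (by positivity)]
  have hstat2 : 2 * a3 * (a3 * x) = 2 * a3 * (a1 * s * Real.log (c * s) + a4) := by rw [hstat]
  have hs2' : a3 ^ 2 * s ^ 2 = a3 ^ 2 * x := by rw [hs2]
  nlinarith [key, hstat2, hs2']
end

section
/- Let α ∈ (0,1), μ_l > 0, and let T ≥ 1 be an integer. Let (x_t)_{t≥1} and (y_t)_{t≥1} be sequences of real numbers with y_t ≥ μ_l for all t. For each t ≥ 1 let e(t) = T·⌈t/T⌉ denote the end of the phase containing t. Suppose that for every t ≥ 1 with x_t ≠ y_t we have Σ_{i=1}^{t} x_i + α·μ_l·(e(t) − t) ≥ (1−α)·Σ_{i=1}^{t} y_i. Then for every integer k ≥ 1, Σ_{i=1}^{kT} x_i ≥ (1−α)·Σ_{i=1}^{kT} y_i. -/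
open Finset

/-- Deterministic core of the checkpoint conservative guarantee: checkpoints
are at times `kT`; `e(t) = T·⌈t/T⌉` is the end of the phase containing `t`.
If whenever a non-baseline action is played at step `t` (`x_t ≠ y_t`) the
checkpoint conservative condition
`∑_{i≤t} x_i + α·μ_l·(e(t) − t) ≥ (1−α)·∑_{i≤t} y_i` is verified, then
`∑_{i≤kT} x_i ≥ (1−α)·∑_{i≤kT} y_i` holds at every checkpoint `kT`. -/
theorem stmt_9 (α μl : ℝ) (hα0 : 0 < α) (hα1 : α < 1) (hμl : 0 < μl)
    (T : ℕ) (hT : 1 ≤ T) (x y : ℕ → ℝ)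
    (hy : ∀ t : ℕ, 1 ≤ t → μl ≤ y t)
    (h : ∀ t : ℕ, 1 ≤ t → x t ≠ y t →
      ∑ i ∈ Finset.Icc 1 t, x i
          + α * μl * ((T * ((t + T - 1) / T) : ℕ) - (t : ℝ)) ≥
        (1 - α) * ∑ i ∈ Finset.Icc 1 t, y i) :
    ∀ k : ℕ, 1 ≤ k →
      ∑ i ∈ Finset.Icc 1 (k * T), x i ≥
        (1 - α) * ∑ i ∈ Finset.Icc 1 (k * T), y i := by
  intro k hk
  set N := k * T with hN
  have hyN : ∀ i ∈ Finset.Icc 1 N, μl ≤ y i := by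
    intro i hi
    exact hy i (Finset.mem_Icc.mp hi).1
  set S := (Finset.Icc 1 N).filter (fun t => x t ≠ y t) with hS
  by_cases hSe : S = ∅
  · -- all x = y on the interval
    have hxy : ∀ i ∈ Finset.Icc 1 N, x i = y i := by
      intro i hi
      by_contra hne
      have : i ∈ S := Finset.mem_filter.mpr ⟨hi, hne⟩
      simp [hSe] at this
    have hsum : ∑ i ∈ Finset.Icc 1 N, x i = ∑ i ∈ Finset.Icc 1 N, y i :=
      Finset.sum_congr rfl hxy
    have hypos : (0:ℝ) ≤ ∑ i ∈ Finset.Icc 1 N, y i :=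
      Finset.sum_nonneg fun i hi => le_trans hμl.le (hyN i hi)
    rw [hsum]
    nlinarith
  · have hSne : S.Nonempty := Finset.nonempty_iff_ne_empty.mpr hSe
    set t := S.max' hSne with ht
    have htS : t ∈ S := S.max'_mem hSne
    obtain ⟨htIcc, htne⟩ := Finset.mem_filter.mp htS
    obtain ⟨ht1, htN⟩ := Finset.mem_Icc.mp htIcc
    -- hypothesis at t
    have key := h t ht1 htne
    -- phase end bound : T * ((t + T - 1)/T) ≤ N
    have hE : T * ((t + T - 1) / T) ≤ N := by
      have htN' : t ≤ k * T := by rwa [← hN]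
      have hdiv : (t + T - 1) / T ≤ k := by
        by_contra hlt
        push_neg at hlt
        have h2 := (Nat.le_div_iff_mul_le (by omega : 0 < T)).mp hlt
        rw [Nat.succ_mul] at h2
        omega
      calc T * ((t + T - 1) / T) ≤ T * k := Nat.mul_le_mul_left T hdiv
        _ = N := by rw [hN, Nat.mul_comm]
    -- on (t, N], x = y
    have hxy : ∀ i ∈ Finset.Ioc t N, x i = y i := by
      intro i hi
      obtain ⟨hi1, hi2⟩ := Finset.mem_Ioc.mp hi
      by_contra hne
      have hiS : i ∈ S := Finset.mem_filter.mpr ⟨Finset.mem_Icc.mpr ⟨by omega, hi2⟩, hne⟩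
      have := S.le_max' i hiS
      omega
    have hyB : ∀ i ∈ Finset.Ioc t N, μl ≤ y i := by
      intro i hi
      obtain ⟨hi1, _⟩ := Finset.mem_Ioc.mp hi
      exact hy i (by omega)
    -- split sums
    have hIcc0 : ∀ n : ℕ, Finset.Icc 1 n = Finset.Ioc 0 n := by
      intro n; ext i; simp [Nat.lt_iff_add_one_le]
    have hsplitx : ∑ i ∈ Finset.Ioc 0 t, x i + ∑ i ∈ Finset.Ioc t N, x i
        = ∑ i ∈ Finset.Ioc 0 N, x i :=
      Finset.sum_Ioc_consecutive _ (Nat.zero_le t) htN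
    have hsplity : ∑ i ∈ Finset.Ioc 0 t, y i + ∑ i ∈ Finset.Ioc t N, y i
        = ∑ i ∈ Finset.Ioc 0 N, y i :=
      Finset.sum_Ioc_consecutive _ (Nat.zero_le t) htN
    have hxeq : ∑ i ∈ Finset.Ioc t N, x i = ∑ i ∈ Finset.Ioc t N, y i :=
      Finset.sum_congr rfl hxy
    -- lower bound on tail sum of y
    have hcard : (Finset.Ioc t N).card = N - t := by simp
    have htail : (N - t : ℕ) * μl ≤ ∑ i ∈ Finset.Ioc t N, y i := by
      have := Finset.card_nsmul_le_sum (Finset.Ioc t N) y μl hyB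
      rwa [hcard, nsmul_eq_mul] at this
    -- cast facts
    have hEc : ((T * ((t + T - 1) / T) : ℕ) : ℝ) ≤ (N : ℝ) := Nat.cast_le.mpr hE
    have htNc : (t : ℝ) ≤ (N : ℝ) := Nat.cast_le.mpr htN
    have hcast : ((N - t : ℕ) : ℝ) = (N : ℝ) - (t : ℝ) := by
      rw [Nat.cast_sub htN]
    rw [hIcc0, ← hsplitx, ← hsplity, hxeq]
    rw [hIcc0] at key
    rw [hcast] at htail
    nlinarith [mul_pos hα0 hμl]
end
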